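/- Let G be a Klee-graph. For every vertex v of G there exists a v-join, i.e., a spanning subgraph of G in which v has degree 3 and every other vertex has degree 1. -/

import Mathlib

open SimpleGraph

def IsCubic {V : Type} (G : SimpleGraph V) : Prop :=
  ∀ v : V, (G.neighborSet v).ncard = 3

def Bridgeless {V : Type} (G : SimpleGraph V) : Prop :=
  ∀ e : Sym2 V, ¬ G.IsBridge e

def IsLonely {V : Type} (G : SimpleGraph V) (e : Sym2 V) : Prop :=
  ∃! M : G.Subgraph, M.IsPerfectMatching ∧ e ∈ M.edgeSet

noncomputable def lonelyCount {V : Type} (G : SimpleGraph V) : ℕ :=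
  {e : Sym2 V | IsLonely G e}.ncard

def IsVJoin {V : Type} {G : SimpleGraph V} (v : V) (J : G.Subgraph) : Prop :=
  J.IsSpanning ∧ (J.neighborSet v).ncard = 3 ∧ ∀ u : V, u ≠ v → (J.neighborSet u).ncard = 1

def IsThreeConnected {V : Type} [Fintype V] (G : SimpleGraph V) : Prop :=
  4 ≤ Fintype.card V ∧ ∀ S : Set V, S.ncard ≤ 2 → (G.induce (Sᶜ : Set V)).Connected

def cutConn {V₁ V₂ : Type} (G₁ : SimpleGraph V₁) (G₂ : SimpleGraph V₂)
    (x₁ y₁ : V₁) (x₂ y₂ : V₂) : SimpleGraph (V₁ ⊕ V₂) where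
  Adj u w :=
    match u, w with
    | Sum.inl a, Sum.inl b => G₁.Adj a b ∧ s(a, b) ≠ s(x₁, y₁)
    | Sum.inl a, Sum.inr b => (a = x₁ ∧ b = x₂) ∨ (a = y₁ ∧ b = y₂)
    | Sum.inr a, Sum.inl b => (b = x₁ ∧ a = x₂) ∨ (b = y₁ ∧ a = y₂)
    | Sum.inr a, Sum.inr b => G₂.Adj a b ∧ s(a, b) ≠ s(x₂, y₂)
  symm := by
    refine ⟨?_⟩
    rintro (a | a) (b | b) h
    · exact ⟨h.1.symm, by rw [Sym2.eq_swap]; exact h.2⟩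
    · exact h
    · exact h
    · exact ⟨h.1.symm, by rw [Sym2.eq_swap]; exact h.2⟩
  loopless := by
    refine ⟨?_⟩
    rintro (a | a) h
    · exact G₁.irrefl h.1
    · exact G₂.irrefl h.1

def ExpVert {V : Type} (G : SimpleGraph V) (v : V) : Type :=
  {u : V // u ≠ v} ⊕ {u : V // G.Adj v u}

def triangleExpansion {V : Type} (G : SimpleGraph V) (v : V) :
    SimpleGraph (ExpVert G v) where
  Adj u w :=
    match u, w with
    | Sum.inl a, Sum.inl b => G.Adj a.1 b.1
    | Sum.inl a, Sum.inr x => a.1 = x.1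
    | Sum.inr x, Sum.inl a => x.1 = a.1
    | Sum.inr x, Sum.inr y => x.1 ≠ y.1
  symm := by
    refine ⟨?_⟩
    rintro (a | a) (b | b) h
    · exact h.symm
    · exact h.symm
    · exact h.symm
    · exact h.symm
  loopless := by
    refine ⟨?_⟩
    rintro (a | a) h
    · exact G.irrefl h
    · exact h rfl

def mapEnd {V : Type} [DecidableEq V] (G : SimpleGraph V) (v : V) {a b : V}
    (h : G.Adj a b) : ExpVert G v :=
  if ha : a = v then Sum.inr ⟨b, by rwa [ha] at h⟩ else Sum.inl ⟨a, ha⟩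

inductive IsKlee : ∀ {V : Type}, SimpleGraph V → Prop
  | k4 {V : Type} {G : SimpleGraph V} (h : Nonempty (G ≃g completeGraph (Fin 4))) : IsKlee G
  | expand {V W : Type} {G : SimpleGraph V} (H : SimpleGraph W) (w : W)
      (hH : IsKlee H) (h : Nonempty (G ≃g triangleExpansion H w)) : IsKlee G

def CyclicFourEdgeConnected {V : Type} (G : SimpleGraph V) : Prop :=
  ∀ S : Set V, ¬ (G.induce S).IsAcyclic → ¬ (G.induce (Sᶜ : Set V)).IsAcyclic →
    4 ≤ {p : V × V | p.1 ∈ S ∧ p.2 ∉ S ∧ G.Adj p.1 p.2}.ncard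


namespace KleeAux

variable {V : Type}

def mkSub (G : SimpleGraph V) (r : V → V → Prop) (hs : Symmetric r)
    (hle : ∀ ⦃a b⦄, r a b → G.Adj a b) : G.Subgraph where
  verts := Set.univ
  Adj := r
  adj_sub := fun h => hle h
  edge_vert := fun _ => trivial
  symm := ⟨fun a b h => hs h⟩

def Good (G : SimpleGraph V) : Prop :=
  IsCubic G ∧ (∀ v, ∃ J : G.Subgraph, IsVJoin v J) ∧
    ∀ a b, G.Adj a b → ∃ M : G.Subgraph, M.IsPerfectMatching ∧ M.Adj a b

lemma third {s : Set V} (h3 : s.ncard = 3) {u m : V} (hu : u ∈ s) (hm : m ∈ s)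
    (hum : u ≠ m) : ∃! t, t ∈ s ∧ t ≠ u ∧ t ≠ m := by
  obtain ⟨x, y, z, hxy, hxz, hyz, rfl⟩ := Set.ncard_eq_three.mp h3
  simp only [Set.mem_insert_iff, Set.mem_singleton_iff] at hu hm ⊢
  rcases hu with rfl | rfl | rfl <;> rcases hm with rfl | rfl | rfl <;>
    first
      | exact absurd rfl hum
      | exact ⟨z, by tauto, by rintro t ⟨(rfl | rfl | rfl), h1, h2⟩ <;> tauto⟩
      | exact ⟨y, by tauto, by rintro t ⟨(rfl | rfl | rfl), h1, h2⟩ <;> tauto⟩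
      | exact ⟨x, by tauto, by rintro t ⟨(rfl | rfl | rfl), h1, h2⟩ <;> tauto⟩

lemma good_of_iso {V W : Type} {G : SimpleGraph V} {G' : SimpleGraph W}
    (e : G ≃g G') (hG' : Good G') : Good G := by
  obtain ⟨hcub, hjoin, hpm⟩ := hG'
  have pb : ∀ J' : G'.Subgraph, ∃ J : G.Subgraph,
      (∀ a b, J.Adj a b ↔ J'.Adj (e a) (e b)) ∧ J.IsSpanning ∧
      ∀ v, (J.neighborSet v).ncard = (J'.neighborSet (e v)).ncard := by
    intro J'
    refine ⟨mkSub G (fun a b => J'.Adj (e a) (e b)) (fun a b h => J'.adj_symm h)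
      (fun a b h => e.map_adj_iff.mp (J'.adj_sub h)), fun a b => Iff.rfl,
      fun _ => trivial, fun v => ?_⟩
    have h1 : (mkSub G (fun a b => J'.Adj (e a) (e b)) (fun a b h => J'.adj_symm h)
        (fun a b h => e.map_adj_iff.mp (J'.adj_sub h))).neighborSet v
        = ⇑e ⁻¹' (J'.neighborSet (e v)) := rfl
    rw [h1, ← Set.ncard_image_of_injective _ e.injective,
      Set.image_preimage_eq _ e.surjective]
  have hnb : ∀ v, ⇑e '' G.neighborSet v = G'.neighborSet (e v) := by
    intro v
    ext x
    constructor
    · rintro ⟨u, hu, rfl⟩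
      exact e.map_adj_iff.mpr hu
    · intro hx
      refine ⟨e.symm x, ?_, e.apply_symm_apply x⟩
      have := e.map_adj_iff (v := v) (w := e.symm x)
      rw [e.apply_symm_apply] at this
      exact this.mp hx
  refine ⟨fun v => ?_, fun v => ?_, fun a b hab => ?_⟩
  · rw [← Set.ncard_image_of_injective _ e.injective, hnb]
    exact hcub (e v)
  · obtain ⟨J', hJ'⟩ := hjoin (e v)
    obtain ⟨J, hadj, hsp, hdeg⟩ := pb J'
    refine ⟨J, hsp, ?_, fun u hu => ?_⟩
    · rw [hdeg]; exact hJ'.2.1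
    · rw [hdeg]; exact hJ'.2.2 (e u) (fun h => hu (e.injective h))
  · obtain ⟨M', hM', hadj'⟩ := hpm (e a) (e b) (e.map_adj_iff.mpr hab)
    obtain ⟨M, hadj, hsp, _⟩ := pb M'
    refine ⟨M, ⟨?_, hsp⟩, (hadj a b).mpr hadj'⟩
    intro x _
    obtain ⟨y', hy', huniq⟩ := hM'.1 (hM'.2 (e x))
    refine ⟨e.symm y', ?_, fun y hy => ?_⟩
    · exact (hadj x (e.symm y')).mpr (by rw [e.apply_symm_apply]; exact hy')
    · have := huniq (e y) ((hadj x y).mp hy)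
      exact e.injective (by rw [e.apply_symm_apply, this])

lemma good_K4 : Good (completeGraph (Fin 4)) := by
  have hd : ∀ v : Fin 4, v + 1 ≠ v + 2 ∧ v + 1 ≠ v + 3 ∧ v + 2 ≠ v + 3 := by decide
  have hset : ∀ v : Fin 4, {u : Fin 4 | u ≠ v} = {v + 1, v + 2, v + 3} := by
    intro v
    ext u
    simp only [Set.mem_setOf_eq, Set.mem_insert_iff, Set.mem_singleton_iff]
    revert v u; decide
  have hcard : ∀ v : Fin 4, ({u : Fin 4 | u ≠ v}).ncard = 3 := by
    intro v
    rw [hset v]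
    exact Set.ncard_eq_three.mpr ⟨_, _, _, (hd v).1, (hd v).2.1, (hd v).2.2, rfl⟩
  refine ⟨fun v => ?_, fun v => ?_, fun a b hab => ?_⟩
  · have : (completeGraph (Fin 4)).neighborSet v = {u : Fin 4 | u ≠ v} := by
      ext u; simp [completeGraph, eq_comm, ne_comm]
    rw [this]; exact hcard v
  · have hle : ∀ ⦃a b : Fin 4⦄, (a = v ∧ b ≠ v) ∨ (b = v ∧ a ≠ v) →
        (completeGraph (Fin 4)).Adj a b := by
      rintro a b (⟨rfl, h⟩ | ⟨rfl, h⟩) <;> simp [completeGraph] <;> tauto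
    refine ⟨mkSub _ (fun a b => (a = v ∧ b ≠ v) ∨ (b = v ∧ a ≠ v))
      (by tauto) hle, fun _ => trivial, ?_, fun u hu => ?_⟩
    · have h2 : (mkSub _ (fun a b => (a = v ∧ b ≠ v) ∨ (b = v ∧ a ≠ v)) (by tauto)
          hle).neighborSet v = {u : Fin 4 | u ≠ v} := by
        ext u
        show (v = v ∧ u ≠ v) ∨ (u = v ∧ v ≠ v) ↔ u ≠ v
        tauto
      rw [h2]; exact hcard v
    · have h2 : (mkSub _ (fun a b => (a = v ∧ b ≠ v) ∨ (b = v ∧ a ≠ v)) (by tauto)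
          hle).neighborSet u = {v} := by
        ext b
        show (u = v ∧ b ≠ v) ∨ (b = v ∧ u ≠ v) ↔ b = v
        constructor
        · rintro (⟨rfl, h⟩ | ⟨rfl, h⟩) <;> tauto
        · rintro rfl; exact Or.inr ⟨rfl, hu⟩
      rw [h2]; exact Set.ncard_singleton v
  · have hab' : a ≠ b := hab
    have hC : (Finset.univ \ {a, b} : Finset (Fin 4)).card = 2 := by
      rw [Finset.card_sdiff_of_subset (by simp)]
      simp [Finset.card_insert_of_notMem, hab']
    obtain ⟨c, d, hcd, hCd⟩ := Finset.card_eq_two.mp hC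
    have hc : c ∈ Finset.univ \ ({a, b} : Finset (Fin 4)) := by rw [hCd]; simp
    have hd' : d ∈ Finset.univ \ ({a, b} : Finset (Fin 4)) := by rw [hCd]; simp
    simp only [Finset.mem_sdiff, Finset.mem_univ, Finset.mem_insert,
      Finset.mem_singleton, true_and, not_or] at hc hd'
    have hcov : ∀ x : Fin 4, x = a ∨ x = b ∨ x = c ∨ x = d := by
      intro x
      by_cases hxa : x = a
      · exact Or.inl hxa
      by_cases hxb : x = b
      · exact Or.inr (Or.inl hxb)
      have : x ∈ Finset.univ \ ({a, b} : Finset (Fin 4)) := by simp [hxa, hxb]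
      rw [hCd] at this
      simp only [Finset.mem_insert, Finset.mem_singleton] at this
      tauto
    refine ⟨mkSub _ (fun x y => (x = a ∧ y = b) ∨ (x = b ∧ y = a) ∨
      (x = c ∧ y = d) ∨ (x = d ∧ y = c)) (by tauto) ?_, ⟨?_, fun _ => trivial⟩,
      Or.inl ⟨rfl, rfl⟩⟩
    · rintro x y (⟨rfl, rfl⟩ | ⟨rfl, rfl⟩ | ⟨rfl, rfl⟩ | ⟨rfl, rfl⟩) <;>
        simp [completeGraph] <;> tauto
    · intro x _
      rcases hcov x with rfl | rfl | rfl | rfl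
      · exact ⟨b, Or.inl ⟨rfl, rfl⟩, by rintro y (⟨_, rfl⟩ | ⟨h, _⟩ | ⟨h, _⟩ | ⟨h, _⟩) <;> tauto⟩
      · exact ⟨a, Or.inr (Or.inl ⟨rfl, rfl⟩), by rintro y (⟨h, _⟩ | ⟨_, rfl⟩ | ⟨h, _⟩ | ⟨h, _⟩) <;> tauto⟩
      · exact ⟨d, Or.inr (Or.inr (Or.inl ⟨rfl, rfl⟩)), by rintro y (⟨h, _⟩ | ⟨h, _⟩ | ⟨_, rfl⟩ | ⟨h, _⟩) <;> tauto⟩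
      · exact ⟨c, Or.inr (Or.inr (Or.inr ⟨rfl, rfl⟩)), by rintro y (⟨h, _⟩ | ⟨h, _⟩ | ⟨h, _⟩ | ⟨_, rfl⟩) <;> tauto⟩

section Exp

variable {H : SimpleGraph V} {w : V}

def liftRel (H : SimpleGraph V) (w : V) (J : H.Subgraph) :
    ExpVert H w → ExpVert H w → Prop
  | Sum.inl a, Sum.inl b => J.Adj a.1 b.1
  | Sum.inl a, Sum.inr u => a.1 = u.1 ∧ J.Adj w u.1
  | Sum.inr u, Sum.inl a => a.1 = u.1 ∧ J.Adj w u.1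
  | Sum.inr u, Sum.inr u' => u.1 ≠ u'.1 ∧ ¬ J.Adj w u.1 ∧ ¬ J.Adj w u'.1

def liftSub (J : H.Subgraph) : (triangleExpansion H w).Subgraph :=
  mkSub _ (liftRel H w J)
    (by rintro (a | u) (b | u') h
        · exact J.adj_symm h
        · exact h
        · exact h
        · exact ⟨h.1.symm, h.2.2, h.2.1⟩)
    (by rintro (a | u) (b | u') h
        · exact J.adj_sub h
        · exact h.1
        · exact h.1.symm
        · exact h.1)

lemma liftSub_spanning (J : H.Subgraph) : (liftSub (w := w) J).IsSpanning :=
  fun _ => trivial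

def inlMap (J : H.Subgraph) (a : {u : V // u ≠ w}) :
    ↥((liftSub (w := w) J).neighborSet (Sum.inl a)) → ↥(J.neighborSet a.1)
  | ⟨Sum.inl b, hx⟩ => ⟨b.1, hx⟩
  | ⟨Sum.inr u, hx⟩ => ⟨w, J.adj_symm (show J.Adj w a.1 by rw [hx.1]; exact hx.2)⟩

lemma inlMap_bij (J : H.Subgraph) (a : {u : V // u ≠ w}) :
    Function.Bijective (inlMap (w := w) J a) := by
  constructor
  · rintro ⟨(b | u), hx⟩ ⟨(b' | u'), hx'⟩ h
    · simp only [inlMap, Subtype.mk.injEq] at h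
      exact Subtype.ext (congrArg Sum.inl (Subtype.ext (show b.1 = b'.1 from congrArg (fun p : ↥(J.neighborSet a.1) => (p : V)) h)))
    · simp only [inlMap, Subtype.mk.injEq] at h
      exact absurd (show b.1 = w from congrArg Subtype.val h) b.2
    · simp only [inlMap, Subtype.mk.injEq] at h
      exact absurd (show b'.1 = w from (congrArg Subtype.val h).symm) b'.2
    · have h1 : a.1 = u.1 := hx.1
      have h2 : a.1 = u'.1 := hx'.1
      exact Subtype.ext (congrArg Sum.inr (Subtype.ext (h1 ▸ h2)))
  · rintro ⟨b, hb⟩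
    by_cases hbw : b = w
    · have hb' : J.Adj a.1 w := hbw ▸ hb
      have hwa : H.Adj w a.1 := (J.adj_sub hb').symm
      exact ⟨⟨Sum.inr ⟨a.1, hwa⟩, ⟨rfl, J.adj_symm hb'⟩⟩, Subtype.ext hbw.symm⟩
    · exact ⟨⟨Sum.inl ⟨b, hbw⟩, hb⟩, rfl⟩

lemma liftSub_ncard_inl (J : H.Subgraph) (a : {u : V // u ≠ w}) :
    ((liftSub (w := w) J).neighborSet (Sum.inl a)).ncard
      = (J.neighborSet a.1).ncard := by
  rw [← Nat.card_coe_set_eq, ← Nat.card_coe_set_eq]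
  exact Nat.card_congr (Equiv.ofBijective _ (inlMap_bij J a))

def inrMap (H : SimpleGraph V) (w : V) (x : {u : V // H.Adj w u}) :
    ↥((triangleExpansion H w).neighborSet (Sum.inr x)) → ↥(H.neighborSet w)
  | ⟨Sum.inl _, _⟩ => ⟨x.1, x.2⟩
  | ⟨Sum.inr y, _⟩ => ⟨y.1, y.2⟩

lemma inrMap_bij (x : {u : V // H.Adj w u}) :
    Function.Bijective (inrMap H w x) := by
  constructor
  · rintro ⟨(a | y), hx⟩ ⟨(a' | y'), hx'⟩ h
    · have h1 : x.1 = a.1 := hx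
      have h2 : x.1 = a'.1 := hx'
      exact Subtype.ext (congrArg Sum.inl (Subtype.ext (h1 ▸ h2)))
    · simp only [inrMap, Subtype.mk.injEq] at h
      exact absurd (congrArg Subtype.val h) hx'
    · simp only [inrMap, Subtype.mk.injEq] at h
      exact absurd (congrArg Subtype.val h).symm hx
    · simp only [inrMap, Subtype.mk.injEq] at h
      exact Subtype.ext (congrArg Sum.inr (Subtype.ext (congrArg Subtype.val h)))
  · rintro ⟨b, hb⟩
    by_cases hbx : b = x.1
    · exact ⟨⟨Sum.inl ⟨x.1, fun h => H.loopless.irrefl w (by have h2 := x.2; rw [h] at h2; exact h2)⟩,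
        rfl⟩, Subtype.ext hbx.symm⟩
    · exact ⟨⟨Sum.inr ⟨b, hb⟩, fun h => hbx h.symm⟩, rfl⟩

lemma exp_ncard_inr (x : {u : V // H.Adj w u}) :
    ((triangleExpansion H w).neighborSet (Sum.inr x)).ncard
      = (H.neighborSet w).ncard := by
  rw [← Nat.card_coe_set_eq, ← Nat.card_coe_set_eq]
  exact Nat.card_congr (Equiv.ofBijective _ (inrMap_bij x))

lemma liftSub_isPM (hcub : IsCubic H) {M : H.Subgraph} (hM : M.IsPerfectMatching) :
    (liftSub (w := w) M).IsPerfectMatching := by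
  obtain ⟨hmatch, hspan⟩ := hM
  refine ⟨?_, liftSub_spanning M⟩
  rintro (a | u) -
  · obtain ⟨b, hb, hbu⟩ := hmatch (hspan a.1)
    by_cases hbw : b = w
    · refine ⟨Sum.inr ⟨a.1, (M.adj_sub (hbw ▸ hb)).symm⟩, ⟨rfl, M.adj_symm (hbw ▸ hb)⟩, ?_⟩
      rintro (c | u') hc
      · exact absurd ((hbu c.1 hc).trans hbw) c.2
      · exact congrArg Sum.inr (Subtype.ext hc.1.symm)
    · refine ⟨Sum.inl ⟨b, hbw⟩, hb, ?_⟩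
      rintro (c | u') hc
      · exact congrArg Sum.inl (Subtype.ext (hbu c.1 hc))
      · exfalso
        have h2 : M.Adj a.1 w := by rw [hc.1]; exact hc.2.symm
        exact hbw (hbu w h2).symm
  · obtain ⟨m, hm, hmu⟩ := hmatch (hspan w)
    by_cases hum : u.1 = m
    · have hadj : M.Adj w u.1 := by rw [hum]; exact hm
      refine ⟨Sum.inl ⟨u.1, u.2.ne'⟩, ⟨rfl, hadj⟩, ?_⟩
      rintro (c | u') hc
      · exact congrArg Sum.inl (Subtype.ext hc.1)
      · exact absurd hadj hc.2.1
    · have hnadj : ¬ M.Adj w u.1 := fun h => hum (hmu u.1 h)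
      have hmN : m ∈ H.neighborSet w := M.adj_sub hm
      obtain ⟨t, ⟨htN, htu, htm⟩, htuniq⟩ := third (hcub w) u.2 hmN hum
      have hntadj : ¬ M.Adj w t := fun h => htm (hmu t h)
      refine ⟨Sum.inr ⟨t, htN⟩, ⟨Ne.symm htu, hnadj, hntadj⟩, ?_⟩
      rintro (c | u') hc
      · exact absurd hc.2 hnadj
      · exact congrArg Sum.inr (Subtype.ext (htuniq u'.1
          ⟨u'.2, Ne.symm hc.1, fun h => hc.2.2 (by rw [h]; exact hm)⟩))

def jRel (H : SimpleGraph V) (w : V) (x : {u : V // H.Adj w u}) (M : H.Subgraph) :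
    ExpVert H w → ExpVert H w → Prop
  | Sum.inl a, Sum.inl b => M.Adj a.1 b.1
  | Sum.inl a, Sum.inr u => a.1 = u.1 ∧ u.1 = x.1
  | Sum.inr u, Sum.inl a => a.1 = u.1 ∧ u.1 = x.1
  | Sum.inr u, Sum.inr u' => u.1 ≠ u'.1 ∧ (u.1 = x.1 ∨ u'.1 = x.1)

def jSub (x : {u : V // H.Adj w u}) (M : H.Subgraph) :
    (triangleExpansion H w).Subgraph :=
  mkSub _ (jRel H w x M)
    (by rintro (a | u) (b | u') h
        · exact M.adj_symm h
        · exact h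
        · exact h
        · exact ⟨Ne.symm h.1, h.2.symm⟩)
    (by rintro (a | u) (b | u') h
        · exact M.adj_sub h
        · exact h.1
        · exact h.1.symm
        · exact h.1)

lemma good_exp {H : SimpleGraph V} (hH : Good H) (w : V) :
    Good (triangleExpansion H w) := by
  obtain ⟨hcub, hjoin, hpm⟩ := hH
  have hN3 : (H.neighborSet w).ncard = 3 := hcub w
  refine ⟨?_, ?_, ?_⟩
  · -- cubic
    rintro (a | x)
    · have hset : (triangleExpansion H w).neighborSet (Sum.inl a)
          = (liftSub (w := w) (⊤ : H.Subgraph)).neighborSet (Sum.inl a) := by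
        ext (b | u)
        · exact Iff.rfl
        · exact ⟨fun h => ⟨h, u.2⟩, fun h => h.1⟩
      rw [hset, liftSub_ncard_inl]
      have h2 : (⊤ : H.Subgraph).neighborSet a.1 = H.neighborSet a.1 := by
        ext b; simp [Subgraph.top_adj]
      rw [h2]; exact hcub a.1
    · rw [exp_ncard_inr]; exact hN3
  · -- v-joins
    rintro (a | x)
    · obtain ⟨J, hJsp, hJ3, hJ1⟩ := hjoin a.1
      have hw1 : (J.neighborSet w).ncard = 1 := hJ1 w (Ne.symm a.2)
      obtain ⟨m, hm⟩ := Set.ncard_eq_one.mp hw1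
      have hiff : ∀ b, J.Adj w b ↔ b = m := fun b => (Set.ext_iff.mp hm b)
      have hJwm : J.Adj w m := (hiff m).mpr rfl
      refine ⟨liftSub J, liftSub_spanning J, ?_, ?_⟩
      · rw [liftSub_ncard_inl]; exact hJ3
      · rintro (b | u) hne
        · rw [liftSub_ncard_inl]
          exact hJ1 b.1 (fun h => hne (congrArg Sum.inl (Subtype.ext h)))
        · by_cases hum : u.1 = m
          · have hset : (liftSub (w := w) J).neighborSet (Sum.inr u)
                = {Sum.inl ⟨u.1, u.2.ne'⟩} := by
              ext (c | u')
              · refine Iff.trans ?_ Set.mem_singleton_iff.symm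
                constructor
                · rintro ⟨h1, _⟩; exact congrArg Sum.inl (Subtype.ext h1)
                · intro h
                  injection h with h'
                  subst h'
                  exact ⟨rfl, by rw [hum]; exact hJwm⟩
              · refine Iff.trans ?_ Set.mem_singleton_iff.symm
                constructor
                · rintro ⟨_, h2, _⟩; exact absurd (by rw [hum]; exact hJwm) h2
                · intro h; simp at h
            rw [hset]; exact Set.ncard_singleton _
          · obtain ⟨t, ⟨htN, htu, htm⟩, htuniq⟩ := third hN3 u.2 (J.adj_sub hJwm) hum
            have hset : (liftSub (w := w) J).neighborSet (Sum.inr u)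
                = {Sum.inr ⟨t, htN⟩} := by
              ext (c | u')
              · refine Iff.trans ?_ Set.mem_singleton_iff.symm
                constructor
                · rintro ⟨_, h2⟩; exact absurd ((hiff u.1).mp h2) hum
                · intro h; simp at h
              · refine Iff.trans ?_ Set.mem_singleton_iff.symm
                constructor
                · rintro ⟨h1, _, h3⟩
                  exact congrArg Sum.inr (Subtype.ext (htuniq u'.1
                    ⟨u'.2, Ne.symm h1, fun he => h3 ((hiff u'.1).mpr he)⟩))
                · intro h
                  injection h with h'
                  subst h'
                  exact ⟨Ne.symm htu, fun hh => hum ((hiff u.1).mp hh),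
                    fun hh => htm ((hiff t).mp hh)⟩
            rw [hset]; exact Set.ncard_singleton _
    · obtain ⟨M, hM, hMwx⟩ := hpm w x.1 x.2
      have hWuniq : ∀ c, M.Adj w c → c = x.1 := by
        intro c hc
        obtain ⟨y, _, hyu⟩ := hM.1 (hM.2 w)
        exact (hyu c hc).trans (hyu x.1 hMwx).symm
      have hXuniq : ∀ c, M.Adj x.1 c → c = w := by
        intro c hc
        obtain ⟨y, _, hyu⟩ := hM.1 (hM.2 x.1)
        exact (hyu c hc).trans (hyu w (M.adj_symm hMwx)).symm
      have hset : (jSub (w := w) x M).neighborSet (Sum.inr x)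
          = (triangleExpansion H w).neighborSet (Sum.inr x) := by
        ext (c | u')
        · constructor
          · rintro ⟨h1, -⟩
            exact h1.symm
          · intro h
            have h' : x.1 = c.1 := h
            exact ⟨h'.symm, rfl⟩
        · constructor
          · rintro ⟨h1, -⟩
            exact h1
          · intro h
            have h' : x.1 ≠ u'.1 := h
            exact ⟨h', Or.inl rfl⟩
      refine ⟨jSub (w := w) x M, fun _ => trivial, ?_, ?_⟩
      · rw [hset, exp_ncard_inr]; exact hN3
      · rintro (a | u) hne
        · by_cases hax : a.1 = x.1
          · have hset2 : (jSub (w := w) x M).neighborSet (Sum.inl a) = {Sum.inr x} := by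
              ext (c | u')
              · refine Iff.trans ?_ Set.mem_singleton_iff.symm
                constructor
                · intro hc
                  exact absurd (hXuniq c.1 (by rw [← hax]; exact hc)) c.2
                · intro h; simp at h
              · refine Iff.trans ?_ Set.mem_singleton_iff.symm
                constructor
                · rintro ⟨_, h2⟩; exact congrArg Sum.inr (Subtype.ext h2)
                · intro h
                  injection h with h'
                  subst h'
                  exact ⟨hax, rfl⟩
            rw [hset2]; exact Set.ncard_singleton _
          · obtain ⟨b, hb, hbu⟩ := hM.1 (hM.2 a.1)
            have hbw : b ≠ w := fun h => hax (hWuniq a.1 (M.adj_symm (h ▸ hb)))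
            have hset2 : (jSub (w := w) x M).neighborSet (Sum.inl a)
                = {Sum.inl ⟨b, hbw⟩} := by
              ext (c | u')
              · refine Iff.trans ?_ Set.mem_singleton_iff.symm
                constructor
                · intro hc; exact congrArg Sum.inl (Subtype.ext (hbu c.1 hc))
                · intro h
                  injection h with h'
                  subst h'
                  exact hb
              · refine Iff.trans ?_ Set.mem_singleton_iff.symm
                constructor
                · rintro ⟨h1, h2⟩; exact absurd (h1.trans h2) hax
                · intro h; simp at h
            rw [hset2]; exact Set.ncard_singleton _
        · have hux : u.1 ≠ x.1 := fun h => hne (congrArg Sum.inr (Subtype.ext h))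
          have hset2 : (jSub (w := w) x M).neighborSet (Sum.inr u) = {Sum.inr x} := by
            ext (c | u')
            · refine Iff.trans ?_ Set.mem_singleton_iff.symm
              constructor
              · rintro ⟨_, h2⟩; exact absurd h2 hux
              · intro h; simp at h
            · refine Iff.trans ?_ Set.mem_singleton_iff.symm
              constructor
              · rintro ⟨_, h2 | h2⟩
                · exact absurd h2 hux
                · exact congrArg Sum.inr (Subtype.ext h2)
              · intro h
                injection h with h'
                subst h'
                exact ⟨hux, Or.inr rfl⟩
          rw [hset2]; exact Set.ncard_singleton _
  · -- PM through every edge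
    rintro (a | u) (b | u') hadj
    · obtain ⟨M, hM, hMab⟩ := hpm a.1 b.1 hadj
      exact ⟨liftSub M, liftSub_isPM hcub hM, hMab⟩
    · obtain ⟨M, hM, hMwu⟩ := hpm w u'.1 u'.2
      exact ⟨liftSub M, liftSub_isPM hcub hM, hadj, hMwu⟩
    · obtain ⟨M, hM, hMwu⟩ := hpm w u.1 u.2
      exact ⟨liftSub M, liftSub_isPM hcub hM, hadj.symm, hMwu⟩
    · obtain ⟨t, ⟨htN, htu, htu'⟩, _⟩ := third hN3 u.2 u'.2 hadj
      obtain ⟨M, hM, hMwt⟩ := hpm w t htN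
      have hWuniq : ∀ c, M.Adj w c → c = t := by
        intro c hc
        obtain ⟨y, _, hyu⟩ := hM.1 (hM.2 w)
        exact (hyu c hc).trans (hyu t hMwt).symm
      exact ⟨liftSub M, liftSub_isPM hcub hM, hadj,
        fun h => htu (hWuniq u.1 h).symm, fun h => htu' (hWuniq u'.1 h).symm⟩

end Exp
end KleeAux

theorem stmt10 {V : Type} (G : SimpleGraph V) (h : IsKlee G) :
    ∀ v : V, ∃ J : G.Subgraph, IsVJoin v J := by
  have key : ∀ {W : Type} (G' : SimpleGraph W), IsKlee G' → KleeAux.Good G' := by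
    intro W G' h'
    induction h' with
    | k4 hiso => exact KleeAux.good_of_iso hiso.some KleeAux.good_K4
    | expand H w hH hiso ih => exact KleeAux.good_of_iso hiso.some (KleeAux.good_exp ih w)
  exact fun v => (key G h).2.1 v
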